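/- arXiv:0803.2874 — 6 statements merged into one kernel-verified Lean document; each statement's English description precedes it below -/
import Mathlib

section
/- Let β = (1+√5)/2 and define τ : [−β²/(β²+1), β²/(β²+1)) → ℝ by τ(z) = βz − ⌊((β²+1)/(2β))z + 1/2⌋. Then τ maps [−β²/(β²+1), β²/(β²+1)) into itself, and for every z in this interval, setting yⱼ = ⌊((β²+1)/(2β))τ^{j−1}(z) + 1/2⌋, one has yⱼ ∈ {−1,0,1} and z = Σ_{j≥1} yⱼ β^{-j}. -/
set_option maxHeartbeats 1000000


theorem stmt_6 (β : ℝ) (hβ : β = (1 + Real.sqrt 5) / 2)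
    (τ : ℝ → ℝ) (hτ : ∀ z, τ z = β * z - ⌊(β ^ 2 + 1) / (2 * β) * z + 1 / 2⌋)
    (I : Set ℝ) (hI : I = Set.Ico (-(β ^ 2 / (β ^ 2 + 1))) (β ^ 2 / (β ^ 2 + 1))) :
    (∀ z ∈ I, τ z ∈ I) ∧
    ∀ z ∈ I,
      (∀ j : ℕ, 1 ≤ j →
        (⌊(β ^ 2 + 1) / (2 * β) * (τ^[j - 1] z) + 1 / 2⌋ = -1 ∨
         ⌊(β ^ 2 + 1) / (2 * β) * (τ^[j - 1] z) + 1 / 2⌋ = 0 ∨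
         ⌊(β ^ 2 + 1) / (2 * β) * (τ^[j - 1] z) + 1 / 2⌋ = 1)) ∧
      z = ∑' j : ℕ, (⌊(β ^ 2 + 1) / (2 * β) * (τ^[j] z) + 1 / 2⌋ : ℝ) * β ^ (-((j : ℤ) + 1)) := by
  have h5 : Real.sqrt 5 ^ 2 = 5 := Real.sq_sqrt (by norm_num)
  have h5nn : (0:ℝ) ≤ Real.sqrt 5 := Real.sqrt_nonneg 5
  have hb2 : β ^ 2 = β + 1 := by rw [hβ]; nlinarith [h5]
  have hb1 : 1 < β := by rw [hβ]; nlinarith [h5, h5nn]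
  have hb3 : β < 2 := by rw [hβ]; nlinarith [h5, h5nn]
  have hbpos : (0:ℝ) < β := by linarith
  have hd : (0:ℝ) < β ^ 2 + 1 := by nlinarith
  -- membership characterization without division
  have hmem : ∀ w : ℝ, w ∈ I ↔ (-(β ^ 2) ≤ (β ^ 2 + 1) * w ∧ (β ^ 2 + 1) * w < β ^ 2) := by
    intro w
    rw [hI, Set.mem_Ico]
    constructor
    · rintro ⟨h1, h2⟩
      have h1' : -(β ^ 2) / (β ^ 2 + 1) ≤ w := by rwa [neg_div]
      rw [div_le_iff₀ hd] at h1'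
      rw [lt_div_iff₀ hd] at h2
      constructor <;> nlinarith
    · rintro ⟨h1, h2⟩
      constructor
      · rw [← neg_div, div_le_iff₀ hd]; nlinarith
      · rw [lt_div_iff₀ hd]; nlinarith
  -- the key step: floor is in {-1,0,1} and invariance
  have step : ∀ w : ℝ, -(β ^ 2) ≤ (β ^ 2 + 1) * w → (β ^ 2 + 1) * w < β ^ 2 →
      ((⌊(β ^ 2 + 1) / (2 * β) * w + 1 / 2⌋ = -1 ∨ ⌊(β ^ 2 + 1) / (2 * β) * w + 1 / 2⌋ = 0 ∨
        ⌊(β ^ 2 + 1) / (2 * β) * w + 1 / 2⌋ = 1) ∧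
       -(β ^ 2) ≤ (β ^ 2 + 1) * (β * w - ⌊(β ^ 2 + 1) / (2 * β) * w + 1 / 2⌋) ∧
       (β ^ 2 + 1) * (β * w - ⌊(β ^ 2 + 1) / (2 * β) * w + 1 / 2⌋) < β ^ 2) := by
    intro w hw1 hw2
    set k : ℤ := ⌊(β ^ 2 + 1) / (2 * β) * w + 1 / 2⌋ with hk
    have harg : (β ^ 2 + 1) / (2 * β) * w + 1 / 2 = ((β ^ 2 + 1) * w + β) / (2 * β) := by
      field_simp
    have hfl1 : (k : ℝ) ≤ ((β ^ 2 + 1) * w + β) / (2 * β) := by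
      rw [← harg]; exact Int.floor_le _
    have hfl2 : ((β ^ 2 + 1) * w + β) / (2 * β) < (k : ℝ) + 1 := by
      rw [← harg]; exact Int.lt_floor_add_one _
    have h2b : (0:ℝ) < 2 * β := by linarith
    rw [le_div_iff₀ h2b] at hfl1
    rw [div_lt_iff₀ h2b] at hfl2
    have hklb : (-2 : ℝ) < (k : ℝ) := by nlinarith
    have hkub : (k : ℝ) < 2 := by nlinarith
    have hklb' : (-2 : ℤ) < k := by exact_mod_cast hklb
    have hkub' : k < 2 := by exact_mod_cast hkub
    have hcases : k = -1 ∨ k = 0 ∨ k = 1 := by omega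
    have hbcube : β ^ 3 = 2 * β + 1 := by nlinarith [hb2]
    refine ⟨hcases, ?_, ?_⟩ <;>
      rcases hcases with h | h | h <;>
        rw [h] at hfl1 hfl2 ⊢ <;> push_cast at hfl1 hfl2 ⊢ <;>
          nlinarith [hb2, hbcube, mul_le_mul_of_nonneg_left hfl1 hbpos.le,
            mul_lt_mul_of_pos_left hfl2 hbpos, mul_le_mul_of_nonneg_left hw1 hbpos.le,
            mul_lt_mul_of_pos_left hw2 hbpos]
  have hτI : ∀ z ∈ I, τ z ∈ I := by
    intro z hz
    rw [hmem] at hz ⊢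
    rw [hτ]
    exact (step z hz.1 hz.2).2
  have hiter : ∀ z ∈ I, ∀ n : ℕ, τ^[n] z ∈ I := by
    intro z hz n
    induction n with
    | zero => simpa using hz
    | succ n ih => rw [Function.iterate_succ_apply']; exact hτI _ ih
  refine ⟨hτI, ?_⟩
  intro z hz
  have hfloor : ∀ n : ℕ, ⌊(β ^ 2 + 1) / (2 * β) * (τ^[n] z) + 1 / 2⌋ = -1 ∨
      ⌊(β ^ 2 + 1) / (2 * β) * (τ^[n] z) + 1 / 2⌋ = 0 ∨
      ⌊(β ^ 2 + 1) / (2 * β) * (τ^[n] z) + 1 / 2⌋ = 1 := by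
    intro n
    have h := (hmem _).mp (hiter z hz n)
    exact (step _ h.1 h.2).1
  refine ⟨fun j _ => hfloor (j - 1), ?_⟩
  set f : ℕ → ℝ := fun j => (⌊(β ^ 2 + 1) / (2 * β) * (τ^[j] z) + 1 / 2⌋ : ℝ) * β ^ (-((j : ℤ) + 1))
    with hf
  have hzpow : ∀ m : ℕ, β ^ (-(m : ℤ)) = (β⁻¹) ^ m := by
    intro m
    rw [zpow_neg, ← inv_zpow, zpow_natCast]
  have hinvlt : β⁻¹ < 1 := inv_lt_one_of_one_lt₀ hb1
  have hinvnn : (0:ℝ) ≤ β⁻¹ := by positivity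
  -- bound on elements of I
  have habs : ∀ w ∈ I, |w| ≤ 1 := by
    intro w hw
    rw [hmem] at hw
    rw [abs_le]
    constructor <;> nlinarith [hw.1, hw.2]
  -- partial sums
  have hpartial : ∀ n : ℕ, ∑ j ∈ Finset.range n, f j = z - τ^[n] z * β ^ (-(n : ℤ)) := by
    intro n
    induction n with
    | zero => simp
    | succ n ih =>
      rw [Finset.sum_range_succ, ih]
      have hit : τ^[n + 1] z = β * τ^[n] z -
          ⌊(β ^ 2 + 1) / (2 * β) * (τ^[n] z) + 1 / 2⌋ := by
        rw [Function.iterate_succ_apply', hτ]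
      rw [hit, hf]
      have e1 : β ^ (-((n : ℕ) : ℤ)) = β * β ^ (-((n : ℤ) + 1)) := by
        rw [← zpow_one_add₀ (ne_of_gt hbpos)]; congr 1; ring
      have e2 : (-(((n + 1 : ℕ) : ℤ))) = -((n : ℤ) + 1) := by push_cast; ring
      rw [e2, e1]
      ring
  -- summability
  have hsumm : Summable f := by
    apply Summable.of_abs
    apply Summable.of_nonneg_of_le (fun j => abs_nonneg _) (fun j => ?_)
      (summable_geometric_of_lt_one hinvnn hinvlt)
    rw [hf, abs_mul]
    have h1 : |(⌊(β ^ 2 + 1) / (2 * β) * (τ^[j] z) + 1 / 2⌋ : ℝ)| ≤ 1 := by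
      rcases hfloor j with h | h | h <;> rw [h] <;> norm_num
    have h2 : |β ^ (-((j : ℤ) + 1))| ≤ (β⁻¹) ^ j := by
      have e : -((j : ℤ) + 1) = -(((j + 1 : ℕ)) : ℤ) := by push_cast; ring
      rw [e, hzpow, abs_of_nonneg (by positivity)]
      exact pow_le_pow_of_le_one hinvnn (le_of_lt hinvlt) (Nat.le_succ j)
    calc |(⌊(β ^ 2 + 1) / (2 * β) * (τ^[j] z) + 1 / 2⌋ : ℝ)| * |β ^ (-((j : ℤ) + 1))|
        ≤ 1 * (β⁻¹) ^ j := by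
          apply mul_le_mul h1 h2 (abs_nonneg _) (by norm_num)
      _ = (β⁻¹) ^ j := one_mul _
  -- the remainder tends to zero
  have hrem : Filter.Tendsto (fun n : ℕ => τ^[n] z * β ^ (-(n : ℤ))) Filter.atTop (nhds 0) := by
    have hbound : ∀ n : ℕ, ‖τ^[n] z * β ^ (-(n : ℤ))‖ ≤ (β⁻¹) ^ n := by
      intro n
      rw [norm_mul, hzpow, Real.norm_eq_abs, Real.norm_eq_abs]
      calc |τ^[n] z| * |(β⁻¹) ^ n| ≤ 1 * (β⁻¹) ^ n := by
            apply mul_le_mul (habs _ (hiter z hz n)) (le_of_eq (abs_of_nonneg (by positivity)))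
              (abs_nonneg _) (by norm_num)
        _ = (β⁻¹) ^ n := one_mul _
    exact squeeze_zero_norm hbound (tendsto_pow_atTop_nhds_zero_of_lt_one hinvnn hinvlt)
  have hA : Filter.Tendsto (fun n : ℕ => ∑ j ∈ Finset.range n, f j) Filter.atTop
      (nhds (∑' j, f j)) := hsumm.hasSum.tendsto_sum_nat
  have hB : Filter.Tendsto (fun n : ℕ => ∑ j ∈ Finset.range n, f j) Filter.atTop (nhds z) := by
    have : (fun n : ℕ => ∑ j ∈ Finset.range n, f j) =
        fun n : ℕ => z - τ^[n] z * β ^ (-(n : ℤ)) := by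
      funext n; exact hpartial n
    rw [this]
    simpa using Filter.Tendsto.const_sub z hrem
  exact (tendsto_nhds_unique hB hA)
end

section
/- Let β = (1+√5)/2 and let (yⱼ)_{j≥1} be the digit sequence produced by the transformation τ(z) = βz − ⌊((β²+1)/(2β))z + 1/2⌋ on [−β²/(β²+1), β²/(β²+1)). If yⱼ = 1 for some j, then y_{j+1} = 0, y_{j+2} = 0, and y_{j+3} ∈ {−1, 0}. Consequently the sequence avoids the factors 11, 101, 1001, 1(−1), 10(−1). -/
set_option maxHeartbeats 1000000

theorem stmt_7 (β : ℝ) (hβ : β = (1 + Real.sqrt 5) / 2)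
    (τ : ℝ → ℝ) (hτ : ∀ z, τ z = β * z - ⌊(β ^ 2 + 1) / (2 * β) * z + 1 / 2⌋)
    (z : ℝ) (hz : z ∈ Set.Ico (-(β ^ 2 / (β ^ 2 + 1))) (β ^ 2 / (β ^ 2 + 1)))
    (y : ℕ → ℤ) (hy : ∀ j : ℕ, y j = ⌊(β ^ 2 + 1) / (2 * β) * (τ^[j] z) + 1 / 2⌋) :
    (∀ j : ℕ, y j = 1 →
        y (j + 1) = 0 ∧ y (j + 2) = 0 ∧ (y (j + 3) = -1 ∨ y (j + 3) = 0)) ∧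
    (∀ j : ℕ, ¬(y j = 1 ∧ y (j + 1) = 1) ∧ ¬(y j = 1 ∧ y (j + 2) = 1) ∧
      ¬(y j = 1 ∧ y (j + 3) = 1) ∧ ¬(y j = 1 ∧ y (j + 1) = -1) ∧
      ¬(y j = 1 ∧ y (j + 2) = -1)) := by
  have hs5 : Real.sqrt 5 ^ 2 = 5 := Real.sq_sqrt (by norm_num)
  have hs2 : (2:ℝ) < Real.sqrt 5 := by nlinarith [Real.sqrt_nonneg 5]
  have hβ2 : β ^ 2 = β + 1 := by rw [hβ]; nlinarith
  have hβ1 : (1:ℝ) < β := by rw [hβ]; nlinarith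
  have hβlt : β < 2 := by nlinarith
  have hβ0 : (0:ℝ) < β := by linarith
  have hβ3 : β ^ 3 = 2*β + 1 := by linear_combination (β + 1) * hβ2
  have hβ4 : β ^ 4 = 3*β + 2 := by linear_combination β * hβ3 + 2 * hβ2
  have hβ5 : β ^ 5 = 5*β + 3 := by linear_combination β * hβ4 + 3 * hβ2
  have hchalf : (0:ℝ) < β - 1/2 := by linarith
  have hc : (β ^ 2 + 1) / (2 * β) = β - 1/2 := by
    rw [div_eq_iff (by positivity)]; nlinarith
  have hB : β ^ 2 / (β ^ 2 + 1) = (β + 2) / 5 := by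
    rw [div_eq_div_iff (by nlinarith) (by norm_num)]; nlinarith
  rw [hB] at hz
  have key : ∀ w : ℝ, w ∈ Set.Ico (-((β+2)/5)) ((β+2)/5) →
      τ w ∈ Set.Ico (-((β+2)/5)) ((β+2)/5) := by
    intro w hw
    obtain ⟨hw1, hw2⟩ := hw
    rw [hτ, hc]
    set n : ℤ := ⌊(β - 1/2) * w + 1/2⌋ with hn
    have h1 : (n:ℝ) ≤ (β-1/2)*w + 1/2 := Int.floor_le _
    have h2 : (β-1/2)*w + 1/2 < n + 1 := Int.lt_floor_add_one _
    clear_value n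
    have hn1 : -1 ≤ n := by
      rw [hn]; apply Int.le_floor.2; push_cast; nlinarith
    have hn2 : n ≤ 1 := by
      have h3 : n < 2 := by rw [hn]; apply Int.floor_lt.2; push_cast; nlinarith
      omega
    have hn' : n = -1 ∨ n = 0 ∨ n = 1 := by omega
    have hp1 : (β-1/2)*(β*w) < β * ((n:ℝ) + 1/2) := by nlinarith
    have hp2 : β * ((n:ℝ) - 1/2) ≤ (β-1/2)*(β*w) := by nlinarith
    rcases hn' with h | h | h <;> subst h <;> push_cast at hp1 hp2 ⊢ <;> constructor
    · nlinarith
    · nlinarith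
    · nlinarith
    · nlinarith
    · nlinarith
    · nlinarith
  have hmem : ∀ j, τ^[j] z ∈ Set.Ico (-((β+2)/5)) ((β+2)/5) := by
    intro j; induction j with
    | zero => simpa using hz
    | succ j ih => rw [Function.iterate_succ_apply']; exact key _ ih
  have main : ∀ j : ℕ, y j = 1 →
      y (j + 1) = 0 ∧ y (j + 2) = 0 ∧ (y (j + 3) = -1 ∨ y (j + 3) = 0) := by
    intro j hj
    set x0 := τ^[j] z with hx0
    have hb0 : x0 < (β+2)/5 := (hmem j).2
    have ha0 : (1:ℝ) ≤ (β - 1/2) * x0 + 1/2 := by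
      have h := Int.floor_le ((β^2+1)/(2*β) * x0 + 1/2)
      rw [← hy j, hj] at h
      push_cast at h
      rw [hc] at h
      linarith
    have hcx : (1:ℝ)/2 ≤ (β - 1/2) * x0 := by linarith
    have hup : (β-1/2) * x0 < (β-1/2) * ((β+2)/5) := by nlinarith
    have e1 : τ^[j+1] z = β * x0 - 1 := by
      rw [Function.iterate_succ_apply', ← hx0, hτ, ← hy j, hj]
      norm_num
    have hy1 : y (j+1) = 0 := by
      rw [hy (j+1), hc, e1]
      apply Int.floor_eq_zero_iff.2
      refine ⟨?_, ?_⟩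
      · nlinarith [mul_le_mul_of_nonneg_left hcx hβ0.le]
      · nlinarith [mul_lt_mul_of_pos_left hup hβ0]
    have e2 : τ^[j+2] z = β * (β * x0 - 1) := by
      have : (j+2) = (j+1) + 1 := rfl
      rw [this, Function.iterate_succ_apply', hτ, ← hy (j+1), hy1, e1]
      norm_num
    have hy2 : y (j+2) = 0 := by
      rw [hy (j+2), hc, e2]
      apply Int.floor_eq_zero_iff.2
      refine ⟨?_, ?_⟩
      · nlinarith [mul_le_mul_of_nonneg_left hcx (by positivity : (0:ℝ) ≤ β^2)]
      · nlinarith [mul_lt_mul_of_pos_left hup (by positivity : (0:ℝ) < β^2)]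
    have e3 : τ^[j+3] z = β * (β * (β * x0 - 1)) := by
      have : (j+3) = (j+2) + 1 := rfl
      rw [this, Function.iterate_succ_apply', hτ, ← hy (j+2), hy2, e2]
      norm_num
    have h3l : (-1:ℤ) ≤ y (j+3) := by
      rw [hy (j+3), hc, e3]
      apply Int.le_floor.2
      push_cast
      nlinarith [mul_le_mul_of_nonneg_left hcx (by positivity : (0:ℝ) ≤ β^3)]
    have h3u : y (j+3) < 1 := by
      rw [hy (j+3), hc, e3]
      apply Int.floor_lt.2
      push_cast
      nlinarith [mul_lt_mul_of_pos_left hup (by positivity : (0:ℝ) < β^3)]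
    exact ⟨hy1, hy2, by omega⟩
  refine ⟨main, fun j => ⟨?_, ?_, ?_, ?_, ?_⟩⟩ <;> rintro ⟨h1, h2⟩ <;>
    obtain ⟨q1, q2, q3⟩ := main j h1 <;> omega
end

section
/- Let F₀ = 1, F₁ = 2, Fₙ = F_{n−1} + F_{n−2}. Every integer N has a unique representation N = Σ_{j=1}^{n} yⱼ F_{n−j} with y₁ ≠ 0 and digits yⱼ ∈ {−1, 0, 1} such that the word y₁⋯yₙ avoids the factors 11, 101, 1001, 1(−1), 10(−1) and their digit-wise negatives. -/
/-!
Call a word admissible if its digits lie in {-1, 0, 1} and it avoids the forbidden factors.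
Then every nonzero digit `d` is followed by `0 0` and then by a digit other than `d`, as far as
the word goes.
Let `maxFval n` be the largest value of an admissible word of length `n`. It satisfies
`Fib2 (n + 2) = maxFval (n + 2) + maxFval n + 1`, and by strong induction on the length an
admissible word of length `n` has value in `(maxFval (n - 1), maxFval n]` if it starts with
`1`, in `[-maxFval (n - 1), maxFval (n - 1)]` if it starts with `0`, and symmetrically if it
starts with `-1`. So the value determines the leading digit, and peeling off digits
shows that words of the same length are determined by their value. Conversely every
`N ∈ (maxFval (n - 1), maxFval n]` is `Fib2 (n - 1) + Fval u` for a word `u` of length `n - 3` not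
starting with `1`, so `1 0 0 u` represents it. Once leading zeros are removed, the length of
a word is the least `n` with `|N| ≤ maxFval n`.
-/

def Fib2 : ℕ → ℕ
  | 0 => 1
  | 1 => 2
  | n + 2 => Fib2 (n + 1) + Fib2 n

/-- Value of a digit word y₁⋯yₙ in the Fibonacci numeration system:
`∑_{j=1}^n yⱼ F_{n-j}`. -/
def Fval (L : List ℤ) : ℤ :=
  ∑ i ∈ Finset.range L.length, L.getD i 0 * (Fib2 (L.length - 1 - i) : ℤ)

/-- Forbidden factors: 11, 101, 1001, 1(-1), 10(-1) and their negatives. -/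
def FforbiddenF : List (List ℤ) :=
  [[1, 1], [1, 0, 1], [1, 0, 0, 1], [1, -1], [1, 0, -1],
   [-1, -1], [-1, 0, -1], [-1, 0, 0, -1], [-1, 1], [-1, 0, 1]]

lemma Fib2_pos : ∀ n, 0 < Fib2 n
  | 0 | 1 => by decide
  | n + 2 => Nat.add_pos_left (Fib2_pos (n + 1)) _

lemma Fval_nil : Fval [] = 0 := rfl

lemma Fval_cons (d : ℤ) (t : List ℤ) : Fval (d :: t) = d * Fib2 t.length + Fval t := by
  unfold Fval
  rw [List.length_cons, Finset.sum_range_succ', add_comm]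
  simp only [List.getD_cons_succ, List.getD_cons_zero, Nat.add_sub_cancel, Nat.sub_zero]
  congr 1
  refine Finset.sum_congr rfl fun i _ => ?_
  congr 3
  omega

lemma Fval_map_neg (L : List ℤ) : Fval (L.map Neg.neg) = -Fval L := by
  induction L with
  | nil => rfl
  | cons d t ih => simp only [List.map_cons, Fval_cons, List.length_map, ih]; ring

lemma Fval_dropWhile_eq_zero (L : List ℤ) : Fval (L.dropWhile (· == 0)) = Fval L := by
  induction L with
  | nil => rfl
  | cons a t ih => by_cases ha : a = 0 <;> simp [ha, ih, Fval_cons]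

def Admissible (L : List ℤ) : Prop :=
  (∀ d ∈ L, d = -1 ∨ d = 0 ∨ d = 1) ∧ ∀ w ∈ FforbiddenF, ¬ w <:+: L

lemma admissible_nil : Admissible [] := by
  simp [Admissible, FforbiddenF]

lemma admissible_cons_iff {a : ℤ} {t : List ℤ} :
    Admissible (a :: t) ↔
      (a = -1 ∨ a = 0 ∨ a = 1) ∧ (∀ w ∈ FforbiddenF, ¬ w <+: a :: t) ∧ Admissible t := by
  simp only [Admissible, List.mem_cons, forall_eq_or_imp, List.infix_cons_iff, not_or]
  grind

lemma admissible_zero_cons_iff {t : List ℤ} : Admissible (0 :: t) ↔ Admissible t := by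
  simp [admissible_cons_iff, FforbiddenF]

namespace Admissible

variable {L t u : List ℤ}

lemma tail {a : ℤ} (h : Admissible (a :: t)) : Admissible t :=
  (admissible_cons_iff.1 h).2.2

lemma of_infix (hL : Admissible L) (ht : t <:+: L) : Admissible t :=
  ⟨fun d hd => hL.1 d (ht.subset hd), fun w hw hwt => hL.2 w hw (hwt.trans ht)⟩

lemma map_neg (hL : Admissible L) : Admissible (L.map Neg.neg) := by
  refine ⟨fun d hd => ?_, fun w hw hwL => ?_⟩
  · obtain ⟨a, ha, rfl⟩ := List.mem_map.1 hd
    rcases hL.1 a ha with rfl | rfl | rfl <;> norm_num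
  · have hneg : ∀ w ∈ FforbiddenF, w.map Neg.neg ∈ FforbiddenF := by decide
    have := hwL.map Neg.neg
    rw [List.map_map, neg_comp_neg, List.map_id] at this
    exact hL.2 _ (hneg w hw) this

lemma headD_mem (hL : Admissible L) : L.headD 0 = -1 ∨ L.headD 0 = 0 ∨ L.headD 0 = 1 := by
  cases L with
  | nil => simp
  | cons a t => exact hL.1 a List.mem_cons_self

lemma one_cons_zero_zero (hu : Admissible u) (h1 : u.headD 0 ≠ 1) :
    Admissible (1 :: 0 :: 0 :: u) := by
  refine admissible_cons_iff.2
    ⟨by simp, ?_, admissible_zero_cons_iff.2 (admissible_zero_cons_iff.2 hu)⟩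
  cases u <;> simp_all [FforbiddenF, eq_comm]

lemma of_one_cons (h : Admissible (1 :: t)) :
    t = [] ∨ t = [0] ∨ ∃ u, t = 0 :: 0 :: u ∧ u.headD 0 ≠ 1 ∧ Admissible u := by
  obtain ⟨-, hpre, ht⟩ := admissible_cons_iff.1 h
  rcases t with _ | ⟨a, _ | ⟨b, u⟩⟩
  · simp
  · obtain ⟨ha, -⟩ := admissible_cons_iff.1 ht
    rcases ha with rfl | rfl | rfl <;> simp_all [FforbiddenF]
  · obtain ⟨ha, -, hbu⟩ := admissible_cons_iff.1 ht
    obtain ⟨hb, -, hu⟩ := admissible_cons_iff.1 hbu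
    rcases ha with rfl | rfl | rfl <;> rcases hb with rfl | rfl | rfl <;>
      rcases u with _ | ⟨c, u⟩ <;> simp_all [FforbiddenF, ne_comm]

end Admissible

/-- The largest value of an admissible word of length `n`; for `n ≥ 4` it is attained by
`1 0 0 0` followed by a maximal word of length `n - 4`. -/
def maxFval : ℕ → ℤ
  | 0 => 0
  | 1 => 1
  | 2 => 2
  | 3 => 3
  | n + 4 => Fib2 (n + 3) + maxFval n

lemma maxFval_add_three (m : ℕ) : maxFval (m + 3) = Fib2 (m + 2) + maxFval (m - 1) := by
  cases m <;> rfl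

lemma Fib2_add_two_eq_maxFval : ∀ n, (Fib2 (n + 2) : ℤ) = maxFval (n + 2) + maxFval n + 1
  | 0 | 1 => rfl
  | n + 2 => by
    have := Fib2_add_two_eq_maxFval n
    show ((Fib2 (n + 3) + Fib2 (n + 2) : ℕ) : ℤ) = Fib2 (n + 3) + maxFval n + maxFval (n + 2) + 1
    push_cast
    linarith

lemma maxFval_lt_succ : ∀ n, maxFval n < maxFval (n + 1)
  | 0 | 1 | 2 | 3 => by decide
  | n + 4 => by
    have := maxFval_lt_succ n
    have : Fib2 (n + 3) ≤ Fib2 (n + 4) := Nat.le_add_right _ _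
    show (Fib2 (n + 3) : ℤ) + maxFval n < Fib2 (n + 4) + maxFval (n + 1)
    omega

lemma maxFval_strictMono : StrictMono maxFval := strictMono_nat_of_lt_succ maxFval_lt_succ

lemma natCast_le_maxFval : ∀ n : ℕ, (n : ℤ) ≤ maxFval n
  | 0 => le_rfl
  | n + 1 => by
    have := natCast_le_maxFval n
    have := maxFval_lt_succ n
    push_cast
    omega

theorem Admissible.Fval_le_and_headD_eq_one_iff {L : List ℤ} (hL : Admissible L) :
    Fval L ≤ maxFval L.length ∧ (L.headD 0 = 1 ↔ maxFval (L.length - 1) < Fval L) := by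
  induction h : L.length using Nat.strong_induction_on generalizing L with
  | _ n ih =>
  subst h
  rcases L with _ | ⟨a, t⟩
  · simp [Fval_nil, maxFval]
  obtain ⟨ha, -, ht⟩ := admissible_cons_iff.1 hL
  obtain ⟨ht_le, -⟩ := ih t.length (by simp) ht rfl
  have hmono := maxFval_strictMono.monotone (Nat.le_add_right t.length 1)
  simp only [List.length_cons, Nat.add_sub_cancel, List.headD_cons, Fval_cons]
  rcases ha with rfl | rfl | rfl
  · have := Fib2_pos t.length
    omega
  · omega
  rcases hL.of_one_cons with rfl | rfl | ⟨u, rfl, hu1, hu⟩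
  · decide
  · decide
  have hlt : u.length < (1 :: 0 :: 0 :: u).length := by simp only [List.length_cons]; omega
  have hu_le := ((ih u.length hlt hu rfl).2.not).1 hu1
  have hu_ge := (ih u.length hlt hu.map_neg (by simp)).1
  rw [Fval_map_neg] at hu_ge
  simp only [Fval_cons, List.length_cons, zero_mul, zero_add, one_mul, true_iff,
    Nat.add_assoc, Nat.reduceAdd]
  have := maxFval_add_three u.length
  have := Fib2_add_two_eq_maxFval u.length
  omega

namespace Admissible

variable {L L' : List ℤ}

lemma Fval_le (hL : Admissible L) : Fval L ≤ maxFval L.length :=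
  hL.Fval_le_and_headD_eq_one_iff.1

lemma headD_eq_one_iff (hL : Admissible L) :
    L.headD 0 = 1 ↔ maxFval (L.length - 1) < Fval L :=
  hL.Fval_le_and_headD_eq_one_iff.2

lemma neg_le_Fval (hL : Admissible L) : -maxFval L.length ≤ Fval L := by
  have := hL.map_neg.Fval_le
  rw [Fval_map_neg, List.length_map] at this
  omega

lemma headD_eq_neg_one_iff (hL : Admissible L) :
    L.headD 0 = -1 ↔ Fval L < -maxFval (L.length - 1) := by
  have := hL.map_neg.headD_eq_one_iff
  rw [← neg_zero, List.headD_map, Fval_map_neg, List.length_map] at this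
  rw [← neg_inj, neg_neg, this]
  omega

lemma headD_eq_of_Fval_eq (hL : Admissible L) (hL' : Admissible L')
    (hlen : L.length = L'.length) (hval : Fval L = Fval L') : L.headD 0 = L'.headD 0 := by
  have h1 := hL.headD_eq_one_iff
  have h1' := hL'.headD_eq_one_iff
  have h2 := hL.headD_eq_neg_one_iff
  have h2' := hL'.headD_eq_neg_one_iff
  rw [hlen, hval] at h1 h2
  rcases hL.headD_mem with h | h | h <;> rcases hL'.headD_mem with h' | h' | h' <;> simp_all

theorem eq_of_Fval_eq (hL : Admissible L) (hL' : Admissible L')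
    (hlen : L.length = L'.length) (hval : Fval L = Fval L') : L = L' := by
  induction L generalizing L' with
  | nil => exact (List.length_eq_zero_iff.1 hlen.symm).symm
  | cons a t ih =>
    rcases L' with _ | ⟨b, t'⟩
    · simp at hlen
    obtain rfl : a = b := hL.headD_eq_of_Fval_eq hL' hlen hval
    simp only [List.length_cons, Nat.add_right_cancel_iff] at hlen
    rw [Fval_cons, Fval_cons, hlen, add_left_cancel_iff] at hval
    rw [ih hL.tail hL'.tail hlen hval]

lemma abs_Fval_le_maxFval_iff (hL : Admissible L) (h0 : ∀ h : L ≠ [], L.head h ≠ 0) (n : ℕ) :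
    |Fval L| ≤ maxFval n ↔ L.length ≤ n := by
  refine ⟨fun h => ?_, fun h => (abs_le.2 ⟨hL.neg_le_Fval, hL.Fval_le⟩).trans
    (maxFval_strictMono.monotone h)⟩
  rcases L with _ | ⟨a, t⟩
  · exact Nat.zero_le n
  have hlo : maxFval t.length < |Fval (a :: t)| := by
    have h1 := hL.headD_eq_one_iff
    have h2 := hL.headD_eq_neg_one_iff
    simp only [List.headD_cons, List.length_cons, Nat.add_sub_cancel] at h1 h2
    rcases hL.headD_mem with ha | ha | ha <;> simp only [List.headD_cons] at ha
    · exact lt_abs.2 (Or.inr (by linarith [h2.1 ha]))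
    · exact absurd ha (h0 (List.cons_ne_nil a t))
    · exact lt_abs.2 (Or.inl (h1.1 ha))
  exact maxFval_strictMono.lt_iff_lt.1 (hlo.trans_le h)

lemma length_eq_of_Fval_eq (hL : Admissible L) (hL' : Admissible L')
    (h0 : ∀ h : L ≠ [], L.head h ≠ 0) (h0' : ∀ h : L' ≠ [], L'.head h ≠ 0)
    (hval : Fval L = Fval L') : L.length = L'.length :=
  le_antisymm
    ((hL.abs_Fval_le_maxFval_iff h0 _).1 (hval ▸ (hL'.abs_Fval_le_maxFval_iff h0' _).2 le_rfl))
    ((hL'.abs_Fval_le_maxFval_iff h0' _).1 (hval ▸ (hL.abs_Fval_le_maxFval_iff h0 _).2 le_rfl))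

end Admissible

theorem exists_admissible_Fval_eq {n : ℕ} {N : ℤ} (hN : |N| ≤ maxFval n) :
    ∃ L, Admissible L ∧ L.length = n ∧ Fval L = N := by
  induction n using Nat.strong_induction_on generalizing N with
  | _ n ih =>
  have head_one : ∀ N, maxFval (n - 1) < N → N ≤ maxFval n →
      ∃ L, Admissible L ∧ L.length = n ∧ Fval L = N := by
    intro N hlo hhi
    match n with
    | 0 => exact (hlo.not_ge hhi).elim
    | 1 =>
      obtain rfl : N = 1 := by
        change 0 < N at hlo
        change N ≤ 1 at hhi
        omega
      exact ⟨[1], by unfold Admissible; decide, rfl, by decide⟩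
    | 2 =>
      obtain rfl : N = 2 := by
        change 1 < N at hlo
        change N ≤ 2 at hhi
        omega
      exact ⟨[1, 0], by unfold Admissible; decide, rfl, by decide⟩
    | m + 3 =>
      rw [show m + 3 - 1 = m + 2 from rfl] at hlo
      have := maxFval_add_three m
      have := Fib2_add_two_eq_maxFval m
      have := maxFval_strictMono.monotone (Nat.sub_le m 1)
      obtain ⟨u, hu, hlen, hval⟩ :=
        ih m (by omega) (N := N - Fib2 (m + 2)) (by rw [abs_le]; omega)
      have hu1 : u.headD 0 ≠ 1 := by rw [Ne, hu.headD_eq_one_iff, hval, hlen]; omega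
      refine ⟨1 :: 0 :: 0 :: u, hu.one_cons_zero_zero hu1, by simp [hlen], ?_⟩
      simp only [Fval_cons, List.length_cons, hlen, hval]
      ring
  rcases n with _ | n
  · obtain rfl : N = 0 := abs_nonpos_iff.1 hN
    exact ⟨[], admissible_nil, rfl, rfl⟩
  rcases le_or_gt |N| (maxFval n) with hle | hlt
  · obtain ⟨t, ht, hlen, hval⟩ := ih n n.lt_succ_self hle
    exact ⟨0 :: t, admissible_zero_cons_iff.2 ht, by simp [hlen], by simp [Fval_cons, hval]⟩
  rcases lt_abs.1 hlt with hpos | hneg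
  · exact head_one N hpos ((le_abs_self N).trans hN)
  · obtain ⟨L, hL, hlen, hval⟩ := head_one (-N) hneg ((neg_le_abs N).trans hN)
    exact ⟨L.map Neg.neg, hL.map_neg, by simp [hlen], by rw [Fval_map_neg, hval, neg_neg]⟩

theorem stmt_9 (N : ℤ) :
    ∃! L : List ℤ,
      (∀ d ∈ L, d = -1 ∨ d = 0 ∨ d = 1) ∧
      (∀ h : L ≠ [], L.head h ≠ 0) ∧
      (∀ w ∈ FforbiddenF, ¬ w.IsInfix L) ∧
      Fval L = N := by
  obtain ⟨L, hL, -, hval⟩ := exists_admissible_Fval_eq (n := N.natAbs) (N := N)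
    (by simpa using natCast_le_maxFval N.natAbs)
  set L₀ := L.dropWhile (· == 0)
  have hL₀ : Admissible L₀ := hL.of_infix (List.dropWhile_suffix _).isInfix
  have h0 : ∀ h : L₀ ≠ [], L₀.head h ≠ 0 := fun h => by
    simpa using List.head_dropWhile_not (· == 0) h
  have hval₀ : Fval L₀ = N := (Fval_dropWhile_eq_zero L).trans hval
  refine ⟨L₀, ⟨hL₀.1, h0, hL₀.2, hval₀⟩, ?_⟩
  rintro L' ⟨hdig, h0', hforb, hval'⟩
  have hL' : Admissible L' := ⟨hdig, hforb⟩
  have hv : Fval L' = Fval L₀ := hval'.trans hval₀.symm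
  exact hL'.eq_of_Fval_eq hL₀ (hL'.length_eq_of_Fval_eq hL₀ h0' h0 hv) hv
end

section
/- Let β be the Tribonacci number (β³ = β² + β + 1). The transformation τ(z) = βz − ⌊((β+1)/2)z + 1/2⌋ maps [−β/(β+1), β/(β+1)) into itself, and for every z in this interval the digits yⱼ = ⌊((β+1)/2)τ^{j−1}(z) + 1/2⌋ lie in {−1,0,1} and satisfy z = Σ_{j≥1} yⱼ β^{-j}. -/
/-!
Since `τ z = β z - y(z)`, the `n`-th partial sum of `∑ y_j β^{-j}` equals `z - β^{-n} τ^n z`, and the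
remainder tends to `0` because the orbit stays in the bounded interval. Invariance of the interval
only needs `β ^ 2 ≤ 2 β + 1`, which the Tribonacci number satisfies since
`β (β ^ 2 - 2 β - 1) = 1 - β ^ 2 < 0`.
-/

open Filter Topology

lemma sq_le_two_mul_add_one_of_tribonacci {β : ℝ} (hβ : 1 < β)
    (hcube : β ^ 3 = β ^ 2 + β + 1) : β ^ 2 ≤ 2 * β + 1 := by
  nlinarith

section BetaExpansion

variable {β : ℝ} {f : ℝ → ℝ} {d : ℝ → ℝ}

lemma sum_digits_div_pow_eq_sub (hβ : β ≠ 0) (hf : ∀ z, f z = β * z - d z) (z : ℝ) (n : ℕ) :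
    ∑ j ∈ Finset.range n, d (f^[j] z) * (β ^ (j + 1))⁻¹ = z - (β ^ n)⁻¹ * f^[n] z := by
  induction n with
  | zero => simp
  | succ n ih =>
    rw [Finset.sum_range_succ, ih, Function.iterate_succ_apply', hf]
    field_simp
    ring

lemma hasSum_digits_of_bounded_orbit (hβ : 1 < β) (hf : ∀ z, f z = β * z - d z) {z C : ℝ}
    (hC : ∀ n, |f^[n] z| ≤ C) :
    HasSum (fun j ↦ d (f^[j] z) * (β ^ (j + 1))⁻¹) z := by
  have hβ0 : 0 < β := by linarith
  have hq : β⁻¹ < 1 := inv_lt_one_of_one_lt₀ hβ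
  have hrem : ∀ n, |(β ^ n)⁻¹ * f^[n] z| ≤ C * β⁻¹ ^ n := fun n ↦ by
    rw [abs_mul, abs_inv, abs_pow, abs_of_pos hβ0, inv_pow, mul_comm]
    exact mul_le_mul_of_nonneg_right (hC n) (by positivity)
  have hterm : ∀ j, d (f^[j] z) * (β ^ (j + 1))⁻¹
      = (β ^ j)⁻¹ * f^[j] z - (β ^ (j + 1))⁻¹ * f^[j + 1] z := fun j ↦ by
    rw [Function.iterate_succ_apply', hf]
    field_simp
    ring
  have hsum : Summable (fun j ↦ d (f^[j] z) * (β ^ (j + 1))⁻¹) := by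
    refine Summable.of_norm_bounded ((summable_geometric_of_lt_one (by positivity) hq).mul_left
      (C + C * β⁻¹)) fun j ↦ ?_
    rw [Real.norm_eq_abs, hterm]
    calc _ ≤ |(β ^ j)⁻¹ * f^[j] z| + |(β ^ (j + 1))⁻¹ * f^[j + 1] z| := abs_sub _ _
      _ ≤ C * β⁻¹ ^ j + C * β⁻¹ ^ (j + 1) := add_le_add (hrem j) (hrem (j + 1))
      _ = (C + C * β⁻¹) * β⁻¹ ^ j := by ring
  refine hsum.hasSum_iff_tendsto_nat.mpr ?_
  simp only [sum_digits_div_pow_eq_sub hβ0.ne' hf]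
  have hrem0 : Tendsto (fun n ↦ (β ^ n)⁻¹ * f^[n] z) atTop (𝓝 0) := by
    refine squeeze_zero_norm hrem ?_
    simpa using (tendsto_pow_atTop_nhds_zero_of_lt_one (by positivity) hq).const_mul C
  simpa using hrem0.const_sub z

end BetaExpansion

section SymmetricDigits

variable {β z : ℝ}

lemma mem_Ico_neg_div_iff (hβ : 0 < β + 1) :
    z ∈ Set.Ico (-(β / (β + 1))) (β / (β + 1)) ↔ -β ≤ (β + 1) * z ∧ (β + 1) * z < β := by
  rw [Set.mem_Ico, ← neg_div, div_le_iff₀ hβ, lt_div_iff₀ hβ, mul_comm z]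

lemma abs_le_one_of_mem_Ico_neg_div (hβ : 0 ≤ β)
    (hz : z ∈ Set.Ico (-(β / (β + 1))) (β / (β + 1))) : |z| ≤ 1 := by
  obtain ⟨hlo, hhi⟩ := (mem_Ico_neg_div_iff (by linarith)).mp hz
  exact abs_le.mpr ⟨by nlinarith, by nlinarith⟩

lemma digit_eq_neg_one_or_zero_or_one (hβ : 0 ≤ β) (hβ3 : β ≤ 3)
    (hz : z ∈ Set.Ico (-(β / (β + 1))) (β / (β + 1))) :
    ⌊(β + 1) / 2 * z + 1 / 2⌋ = -1 ∨ ⌊(β + 1) / 2 * z + 1 / 2⌋ = 0 ∨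
      ⌊(β + 1) / 2 * z + 1 / 2⌋ = 1 := by
  obtain ⟨hlo, hhi⟩ := (mem_Ico_neg_div_iff (by linarith)).mp hz
  have hge : -1 ≤ ⌊(β + 1) / 2 * z + 1 / 2⌋ := by
    rw [Int.le_floor]
    push_cast
    linarith
  have hlt : ⌊(β + 1) / 2 * z + 1 / 2⌋ < 2 := by
    rw [Int.floor_lt]
    push_cast
    linarith
  omega

/-- On the digit-`±1` pieces the image reaches `±(β ^ 2 - β - 1) / (β + 1)`, which stays inside
the interval exactly when `β ^ 2 ≤ 2 * β + 1`. -/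
lemma mapsTo_Ico_neg_div (hβ : 1 ≤ β) (hβsq : β ^ 2 ≤ 2 * β + 1) :
    Set.MapsTo (fun z ↦ β * z - ⌊(β + 1) / 2 * z + 1 / 2⌋)
      (Set.Ico (-(β / (β + 1))) (β / (β + 1))) (Set.Ico (-(β / (β + 1))) (β / (β + 1))) := by
  intro z hz
  have hβ1 : 0 < β + 1 := by linarith
  obtain ⟨hlo, hhi⟩ := (mem_Ico_neg_div_iff hβ1).mp hz
  have hfl := Int.floor_le ((β + 1) / 2 * z + 1 / 2)
  have hfu := Int.lt_floor_add_one ((β + 1) / 2 * z + 1 / 2)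
  simp only [mem_Ico_neg_div_iff hβ1]
  rcases digit_eq_neg_one_or_zero_or_one (by linarith) (by nlinarith) hz with h | h | h <;>
    rw [h] at hfl hfu ⊢ <;> push_cast at hfl hfu ⊢ <;> constructor <;> nlinarith

end SymmetricDigits

theorem stmt_12 (β : ℝ) (hβ : 1 < β) (hcube : β ^ 3 = β ^ 2 + β + 1)
    (τ : ℝ → ℝ) (hτ : ∀ z, τ z = β * z - ⌊(β + 1) / 2 * z + 1 / 2⌋)
    (I : Set ℝ) (hI : I = Set.Ico (-(β / (β + 1))) (β / (β + 1))) :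
    (∀ z ∈ I, τ z ∈ I) ∧
    ∀ z ∈ I,
      (∀ j : ℕ, 1 ≤ j →
        (⌊(β + 1) / 2 * (τ^[j - 1] z) + 1 / 2⌋ = -1 ∨
         ⌊(β + 1) / 2 * (τ^[j - 1] z) + 1 / 2⌋ = 0 ∨
         ⌊(β + 1) / 2 * (τ^[j - 1] z) + 1 / 2⌋ = 1)) ∧
      z = ∑' j : ℕ, (⌊(β + 1) / 2 * (τ^[j] z) + 1 / 2⌋ : ℝ) * β ^ (-((j : ℤ) + 1)) := by
  subst hI
  obtain rfl : τ = fun z ↦ β * z - ⌊(β + 1) / 2 * z + 1 / 2⌋ := funext hτ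
  have hβsq := sq_le_two_mul_add_one_of_tribonacci hβ hcube
  have hmaps := mapsTo_Ico_neg_div hβ.le hβsq
  refine ⟨hmaps, fun z hz ↦ ⟨fun j _ ↦ digit_eq_neg_one_or_zero_or_one (by linarith)
    (by nlinarith) (hmaps.iterate (j - 1) hz), ?_⟩⟩
  have hsum := hasSum_digits_of_bounded_orbit hβ (fun _ ↦ rfl)
    fun n ↦ abs_le_one_of_mem_Ico_neg_div (by linarith) (hmaps.iterate n hz)
  refine hsum.tsum_eq.symm.trans (tsum_congr fun j ↦ ?_)
  rw [zpow_neg, ← Nat.cast_succ, zpow_natCast]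
end

section
/- Let T₀ = 1, T₁ = 2, T₂ = 4, Tₙ = T_{n−1} + T_{n−2} + T_{n−3}. Every integer N has a unique representation N = Σ_{j=1}^{n} yⱼ T_{n−j} with y₁ ≠ 0 and yⱼ ∈ {−1, 0, 1} such that y₁⋯yₙ avoids the factors 11, 101, 1(−1) and their negatives. -/
def Trib : ℕ → ℕ
  | 0 => 1
  | 1 => 2
  | 2 => 4
  | n + 3 => Trib (n + 2) + Trib (n + 1) + Trib n

/-- Value of a digit word y₁⋯yₙ in the Tribonacci numeration system:
`∑_{j=1}^n yⱼ T_{n-j}`. -/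
def Tval (L : List ℤ) : ℤ :=
  ∑ i ∈ Finset.range L.length, L.getD i 0 * (Trib (L.length - 1 - i) : ℤ)

/-- Forbidden factors: 11, 101, 1(-1) and their negatives. -/
def TforbiddenT : List (List ℤ) :=
  [[1, 1], [1, 0, 1], [1, -1], [-1, -1], [-1, 0, -1], [-1, 1]]

/-!
Let `maxVal n` be the largest value of an admissible word of length `n`; then
`maxVal (n + 1) + maxVal n + 1 = T (n + 1)`. The value of an admissible word `a :: L` exceeds
`maxVal |L|` if `a = 1`, is at most `maxVal |L|` in absolute value if `a = 0`, and is below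
`-maxVal |L|` if `a = -1`. So value and length determine the leading digit, hence the whole
word, and padding with leading zeros reduces uniqueness to words of equal length.
Existence is greedy: a value `N` in `(maxVal (n + 1), maxVal (n + 2)]` is written `1 0 w`,
where `w` represents `N - T (n + 1) ∈ [-maxVal n, maxVal (n - 1)]` and therefore does not start
with `1`.
-/

namespace Trib

theorem le_succ : ∀ n, Trib n ≤ Trib (n + 1)
  | 0 | 1 | 2 => by decide
  | n + 3 => by
    show Trib (n + 3) ≤ Trib (n + 3) + Trib (n + 2) + Trib (n + 1)
    omega

theorem succ_le : ∀ n, n + 1 ≤ Trib n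
  | 0 | 1 | 2 => by decide
  | n + 3 => by
    have := succ_le (n + 2)
    have := succ_le (n + 1)
    show n + 4 ≤ Trib (n + 2) + Trib (n + 1) + Trib n
    omega

/-- The largest value of an admissible word of length `n`, attained by `1 0 0 1 0 0 1 ⋯`. -/
def maxVal : ℕ → ℕ
  | 0 => 0
  | 1 => 1
  | 2 => 2
  | n + 3 => Trib (n + 2) + maxVal n

theorem maxVal_succ_succ : ∀ n, maxVal (n + 2) = Trib (n + 1) + maxVal (n - 1)
  | 0 => rfl
  | _ + 1 => rfl

theorem maxVal_succ_add_maxVal : ∀ n, maxVal (n + 1) + maxVal n + 1 = Trib (n + 1)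
  | 0 | 1 | 2 => by decide
  | n + 3 => by
    have := maxVal_succ_add_maxVal n
    show (Trib (n + 3) + maxVal (n + 1)) + (Trib (n + 2) + maxVal n) + 1
        = Trib (n + 3) + Trib (n + 2) + Trib (n + 1)
    omega

theorem maxVal_le_succ : ∀ n, maxVal n ≤ maxVal (n + 1)
  | 0 | 1 | 2 => by decide
  | n + 3 => by
    have := maxVal_le_succ n
    have : Trib (n + 2) ≤ Trib (n + 3) := le_succ _
    show Trib (n + 2) + maxVal n ≤ Trib (n + 3) + maxVal (n + 1)
    omega

theorem maxVal_mono : Monotone maxVal := monotone_nat_of_le_succ maxVal_le_succ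

theorem le_maxVal : ∀ n, n ≤ maxVal n
  | 0 | 1 => by decide
  | n + 2 => by
    rw [maxVal_succ_succ]
    have := succ_le (n + 1)
    omega

theorem tval_nil : Tval [] = 0 := rfl

theorem tval_cons (a : ℤ) (L : List ℤ) :
    Tval (a :: L) = a * Trib L.length + Tval L := by
  unfold Tval
  rw [List.length_cons, Finset.sum_range_succ', add_comm]
  congr 1
  refine Finset.sum_congr rfl fun i _ => ?_
  rw [List.getD_cons_succ]
  congr 3
  omega

theorem tval_map_neg (L : List ℤ) : Tval (L.map Neg.neg) = -Tval L := by
  induction L with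
  | nil => rfl
  | cons a L ih => rw [List.map_cons, tval_cons, tval_cons, ih, List.length_map]; ring

theorem tval_replicate_zero_append (p : ℕ) (L : List ℤ) :
    Tval (List.replicate p 0 ++ L) = Tval L := by
  induction p with
  | zero => rfl
  | succ p ih => rw [List.replicate_succ, List.cons_append, tval_cons, ih, zero_mul, zero_add]

def Admissible (L : List ℤ) : Prop :=
  (∀ d ∈ L, d = -1 ∨ d = 0 ∨ d = 1) ∧ ∀ w ∈ TforbiddenT, ¬ w.IsInfix L

variable {L M : List ℤ} {a : ℤ}

namespace Admissible

theorem of_length_le_one (hL : L.length ≤ 1) (hd : ∀ d ∈ L, d = -1 ∨ d = 0 ∨ d = 1) :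
    Admissible L := by
  refine ⟨hd, fun w hw hwL => ?_⟩
  have : 2 ≤ w.length := by fin_cases hw <;> decide
  have := hwL.length_le
  omega

theorem of_infix (h : Admissible L) (hML : M <:+: L) : Admissible M :=
  ⟨fun d hd => h.1 d (hML.subset hd), fun w hw hwM => h.2 w hw (hwM.trans hML)⟩

theorem tail (h : Admissible (a :: L)) : Admissible L :=
  h.of_infix (List.suffix_cons a L).isInfix

theorem head_mem (h : Admissible (a :: L)) : a = -1 ∨ a = 0 ∨ a = 1 :=
  h.1 a List.mem_cons_self

theorem map_neg (h : Admissible L) : Admissible (L.map Neg.neg) := by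
  refine ⟨fun d hd => ?_, fun w hw hwL => ?_⟩
  · obtain ⟨e, he, rfl⟩ := List.mem_map.mp hd
    rcases h.1 e he with rfl | rfl | rfl <;> simp
  · have hneg : ∀ w ∈ TforbiddenT, w.map Neg.neg ∈ TforbiddenT := by decide
    exact h.2 _ (hneg w hw) (by simpa [Function.comp_def] using hwL.map Neg.neg)

theorem zero_cons (h : Admissible L) : Admissible (0 :: L) := by
  refine ⟨fun d hd => ?_, fun w hw hwL => ?_⟩
  · rcases List.mem_cons.mp hd with rfl | hd
    · simp
    · exact h.1 d hd
  · rcases List.infix_cons_iff.mp hwL with hpre | hinf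
    · fin_cases hw <;> simp at hpre
    · exact h.2 w hw hinf

theorem replicate_zero_append (h : Admissible L) (p : ℕ) :
    Admissible (List.replicate p 0 ++ L) := by
  induction p with
  | zero => exact h
  | succ p ih => exact ih.zero_cons

theorem one_zero_cons (h : Admissible L) (hL : L.head? ≠ some 1) :
    Admissible (1 :: 0 :: L) := by
  refine ⟨fun d hd => ?_, fun w hw hwL => ?_⟩
  · rcases List.mem_cons.mp hd with rfl | hd
    · simp
    · exact h.zero_cons.1 d hd
  · rcases List.infix_cons_iff.mp hwL with hpre | hinf
    · fin_cases hw <;> simp at hpre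
      obtain ⟨t, rfl⟩ := hpre
      simp at hL
    · exact h.zero_cons.2 w hw hinf

theorem eq_nil_or_eq_zero_cons (h : Admissible (1 :: L)) :
    L = [] ∨ ∃ L', L = 0 :: L' ∧ L'.head? ≠ some 1 := by
  have forbid : ∀ w ∈ TforbiddenT, ¬ w <+: 1 :: L := fun w hw hpre => h.2 w hw hpre.isInfix
  rcases L with _ | ⟨b, L'⟩
  · exact .inl rfl
  · rcases h.tail.head_mem with rfl | rfl | rfl
    · exact absurd (by simp) (forbid [1, -1] (by decide))
    · refine .inr ⟨L', rfl, fun hL' => ?_⟩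
      obtain ⟨L'', rfl⟩ : ∃ L'', L' = 1 :: L'' := by
        rcases L' with _ | ⟨c, L''⟩ <;> simp_all
      exact forbid [1, 0, 1] (by decide) (by simp)
    · exact absurd (by simp) (forbid [1, 1] (by decide))

end Admissible

-- The second bound is what the induction needs for the tail after a prefix `1 0`.
theorem tval_le_maxVal : ∀ {L : List ℤ}, Admissible L →
    Tval L ≤ maxVal L.length ∧ (L.head? ≠ some 1 → Tval L ≤ maxVal (L.length - 1))
  | [], _ => by simp [tval_nil]
  | [a], h => by
    rw [tval_cons, tval_nil]
    rcases h.head_mem with rfl | rfl | rfl <;> simp [Trib, maxVal]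
  | a :: b :: L, h => by
    have ih := (tval_le_maxVal h.tail).1
    have hmono := maxVal_le_succ (L.length + 1)
    simp only [List.length_cons, Nat.add_sub_cancel] at ih ⊢
    rcases h.head_mem with rfl | rfl | rfl
    · rw [tval_cons]; exact ⟨by omega, fun _ => by omega⟩
    · rw [tval_cons]; exact ⟨by omega, fun _ => by omega⟩
    · obtain ⟨L', hbL, hL'⟩ := h.eq_nil_or_eq_zero_cons.resolve_left (List.cons_ne_nil _ _)
      obtain ⟨rfl, rfl⟩ := List.cons_eq_cons.mp hbL
      have ih' := (tval_le_maxVal h.tail.tail).2 hL'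
      rw [tval_cons, tval_cons, maxVal_succ_succ]
      simp only [List.length_cons]
      exact ⟨by omega, by simp⟩

theorem neg_maxVal_le_tval (h : Admissible L) : -(maxVal L.length : ℤ) ≤ Tval L := by
  have := (tval_le_maxVal h.map_neg).1
  rw [tval_map_neg, List.length_map] at this
  omega

theorem maxVal_lt_tval_one_cons (h : Admissible (1 :: L)) :
    (maxVal L.length : ℤ) < Tval (1 :: L) := by
  rcases h.eq_nil_or_eq_zero_cons with rfl | ⟨L', rfl, -⟩
  · simp [tval_cons, tval_nil, Trib, maxVal]
  · have := neg_maxVal_le_tval h.tail.tail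
    have := maxVal_succ_add_maxVal L'.length
    rw [tval_cons, tval_cons]
    simp only [List.length_cons]
    omega

theorem tval_neg_one_cons_lt (h : Admissible (-1 :: L)) :
    Tval (-1 :: L) < -(maxVal L.length : ℤ) := by
  have := maxVal_lt_tval_one_cons (L := L.map Neg.neg) (by simpa using h.map_neg)
  rw [show 1 :: L.map Neg.neg = (-1 :: L).map Neg.neg by simp, tval_map_neg,
    List.length_map] at this
  omega

def leadingDigit (n : ℕ) (v : ℤ) : ℤ :=
  if (maxVal n : ℤ) < v then 1 else if v < -(maxVal n : ℤ) then -1 else 0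

theorem Admissible.head_eq_leadingDigit (h : Admissible (a :: L)) :
    a = leadingDigit L.length (Tval (a :: L)) := by
  unfold leadingDigit
  rcases h.head_mem with rfl | rfl | rfl
  · have := tval_neg_one_cons_lt h
    rw [if_neg (by omega), if_pos this]
  · have := (tval_le_maxVal h.tail).1
    have := neg_maxVal_le_tval h.tail
    rw [tval_cons, zero_mul, zero_add, if_neg (by omega), if_neg (by omega)]
  · rw [if_pos (maxVal_lt_tval_one_cons h)]

theorem Admissible.eq_of_length_eq_of_tval_eq :
    ∀ {L M : List ℤ}, Admissible L → Admissible M → L.length = M.length →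
      Tval L = Tval M → L = M
  | [], [], _, _, _, _ => rfl
  | a :: L, b :: M, hL, hM, hlen, hval => by
    have hlen' : L.length = M.length := by simpa using hlen
    obtain rfl : a = b := by
      rw [hL.head_eq_leadingDigit, hM.head_eq_leadingDigit, hval, hlen']
    rw [tval_cons, tval_cons, hlen', add_right_inj] at hval
    rw [hL.tail.eq_of_length_eq_of_tval_eq hM.tail hlen' hval]
  | [], _ :: _, _, _, hlen, _ | _ :: _, [], _, _, hlen, _ => by simp at hlen

theorem Admissible.eq_of_tval_eq (hL : Admissible L) (hM : Admissible M)
    (hL0 : ∀ h : L ≠ [], L.head h ≠ 0) (hM0 : ∀ h : M ≠ [], M.head h ≠ 0)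
    (hval : Tval L = Tval M) : L = M := by
  wlog hlen : M.length ≤ L.length generalizing L M
  · exact (this hM hL hM0 hL0 hval.symm (by omega)).symm
  obtain ⟨p, hp⟩ := Nat.exists_eq_add_of_le hlen
  have hpad : L = List.replicate p 0 ++ M :=
    hL.eq_of_length_eq_of_tval_eq (hM.replicate_zero_append p) (by simp [hp, add_comm])
      (by rw [tval_replicate_zero_append, hval])
  rcases p with _ | p
  · simpa using hpad
  · exact absurd (by simp [hpad]) (hL0 (by simp [hpad]))

theorem exists_admissible_length_eq_tval_eq :
    ∀ (n : ℕ) (N : ℤ), |N| ≤ maxVal n →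
      ∃ L, Admissible L ∧ L.length = n ∧ Tval L = N
  | 0, N, hN => by
    obtain rfl : N = 0 := by simpa [maxVal] using hN
    exact ⟨[], .of_length_le_one (by simp) (by simp), rfl, tval_nil⟩
  | 1, N, hN => by
    have : N = -1 ∨ N = 0 ∨ N = 1 := by simp [maxVal, abs_le] at hN; omega
    exact ⟨[N], .of_length_le_one (by simp) (by simpa using this), rfl,
      by simp [tval_cons, tval_nil, Trib]⟩
  | n + 2, N, hN => by
    have high : ∀ N : ℤ, maxVal (n + 1) < N → N ≤ maxVal (n + 2) →
        ∃ L, Admissible L ∧ L.length = n + 2 ∧ Tval L = N := by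
      intro N hlo hhi
      have hsum := maxVal_succ_add_maxVal n
      have hmono := maxVal_mono (Nat.sub_le n 1)
      rw [maxVal_succ_succ] at hhi
      obtain ⟨L, hL, hlen, hval⟩ := exists_admissible_length_eq_tval_eq n (N - Trib (n + 1))
        (abs_le.mpr ⟨by omega, by omega⟩)
      have hhead : L.head? ≠ some 1 := by
        intro h1
        obtain ⟨L', rfl⟩ : ∃ L', L = 1 :: L' := by
          rcases L with _ | ⟨c, L'⟩ <;> simp_all
        have := maxVal_lt_tval_one_cons hL
        simp only [List.length_cons] at hlen
        rw [hval, show L'.length = n - 1 by omega] at this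
        omega
      refine ⟨1 :: 0 :: L, hL.one_zero_cons hhead, by simp [hlen], ?_⟩
      rw [tval_cons, tval_cons, hval]
      simp [hlen]
    by_cases hlow : |N| ≤ maxVal (n + 1)
    · obtain ⟨L, hL, hlen, hval⟩ := exists_admissible_length_eq_tval_eq (n + 1) N hlow
      exact ⟨0 :: L, hL.zero_cons, by simp [hlen], by rw [tval_cons, hval]; ring⟩
    rcases abs_le.mp hN with ⟨hN₁, hN₂⟩
    rcases le_or_gt 0 N with hpos | hneg
    · exact high N (by rw [abs_of_nonneg hpos] at hlow; omega) hN₂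
    · obtain ⟨L, hL, hlen, hval⟩ :=
        high (-N) (by rw [abs_of_neg hneg] at hlow; omega) (by omega)
      exact ⟨L.map Neg.neg, hL.map_neg, by simp [hlen], by rw [tval_map_neg, hval, neg_neg]⟩

theorem tval_dropWhile_eq_zero (L : List ℤ) : Tval (L.dropWhile (· = 0)) = Tval L := by
  induction L with
  | nil => rfl
  | cons a L ih =>
    by_cases ha : a = 0
    · rw [List.dropWhile_cons_of_pos (by simpa using ha), ih, tval_cons, ha, zero_mul, zero_add]
    · rw [List.dropWhile_cons_of_neg (by simpa using ha)]

theorem exists_admissible_head_ne_zero_tval_eq (N : ℤ) :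
    ∃ L, Admissible L ∧ (∀ h : L ≠ [], L.head h ≠ 0) ∧ Tval L = N := by
  have hN : |N| ≤ maxVal N.natAbs := by
    rw [Int.abs_eq_natAbs]
    exact_mod_cast le_maxVal N.natAbs
  obtain ⟨L, hL, -, hval⟩ := exists_admissible_length_eq_tval_eq N.natAbs N hN
  refine ⟨L.dropWhile (· = 0), hL.of_infix (List.dropWhile_suffix _).isInfix, fun h => ?_,
    by rw [tval_dropWhile_eq_zero, hval]⟩
  simpa using List.head_dropWhile_not _ h

end Trib

theorem stmt_15 (N : ℤ) :
    ∃! L : List ℤ,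
      (∀ d ∈ L, d = -1 ∨ d = 0 ∨ d = 1) ∧
      (∀ h : L ≠ [], L.head h ≠ 0) ∧
      (∀ w ∈ TforbiddenT, ¬ w.IsInfix L) ∧
      Tval L = N := by
  obtain ⟨L, hL, hL0, hval⟩ := Trib.exists_admissible_head_ne_zero_tval_eq N
  refine ⟨L, ⟨hL.1, hL0, hL.2, hval⟩, fun M ⟨hd, hM0, hf, hMval⟩ => ?_⟩
  exact Trib.Admissible.eq_of_tval_eq ⟨hd, hf⟩ hL hM0 hL0 (hMval.trans hval.symm)
end

section
/- Let β be the smallest Pisot number (β³ = β + 1). The transformation τ(z) = βz − ⌊((β²+1)/(2β²))z + 1/2⌋ maps the interval [−β³/(β²+1), β³/(β²+1)) into itself; in particular τ maps [β²/(β²+1), β³/(β²+1)) onto [−β⁻³/(β²+1), β⁻⁴/(β²+1)). -/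
open Set

/-!
With `L = β² / (β² + 1)` the map is `τ z = β z - k` on the digit interval
`[(2k - 1) L, (2k + 1) L)`. Since `β < 3`, the interval `[-βL, βL)` only meets the digits
`k ∈ {-1, 0, 1}`, and on each of these pieces `τ` is an increasing affine map whose image stays in
`[-βL, βL)` thanks to `1 ≤ 2βL` and `β²L ≤ βL + 1`, both consequences of `β³ = β + 1`.
On `[L, βL)` the digit is `1`, so the image is `[βL - 1, β²L - 1)`, and the cubic equation
identifies the endpoints as `-β⁻³ / (β² + 1)` and `β⁻⁴ / (β² + 1)`.
-/

/-- The paper's coefficient `(β² + 1) / (2β²)` is `1 / (2L)` for `L = β² / (β² + 1)`. -/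
noncomputable def symmBetaMap (β L z : ℝ) : ℝ :=
  β * z - ⌊z / (2 * L) + 1 / 2⌋

section symmBetaMap

variable {β L z : ℝ}

lemma floor_div_two_mul_add_half_eq (hL : 0 < L) {k : ℤ}
    (hz : z ∈ Ico ((2 * k - 1) * L) ((2 * k + 1) * L)) :
    ⌊z / (2 * L) + 1 / 2⌋ = k := by
  obtain ⟨hlo, hhi⟩ := hz
  rw [Int.floor_eq_iff, div_add' _ _ _ (by positivity), le_div_iff₀ (by positivity),
    div_lt_iff₀ (by positivity)]
  constructor <;> linarith

lemma symmBetaMap_eq_of_mem (hL : 0 < L) {k : ℤ}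
    (hz : z ∈ Ico ((2 * k - 1) * L) ((2 * k + 1) * L)) :
    symmBetaMap β L z = β * z - k := by
  rw [symmBetaMap, floor_div_two_mul_add_half_eq hL hz]

lemma mapsTo_symmBetaMap (hL : 0 < L) (hβ : 0 < β) (hβ3 : β ≤ 3) (hlow : 1 ≤ 2 * β * L)
    (hhigh : β ^ 2 * L ≤ β * L + 1) :
    MapsTo (symmBetaMap β L) (Ico (-(β * L)) (β * L)) (Ico (-(β * L)) (β * L)) := by
  rintro z ⟨hlo, hhi⟩
  have h3L : β * L ≤ 3 * L := by nlinarith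
  have hβz : -(β ^ 2 * L) ≤ β * z ∧ β * z < β ^ 2 * L := by
    constructor <;> nlinarith
  rcases lt_or_ge z (-L) with hneg | hneg
  · rw [symmBetaMap_eq_of_mem (k := -1) hL ⟨by push_cast; linarith, by push_cast; linarith⟩]
    push_cast
    constructor <;> nlinarith
  rcases lt_or_ge z L with hpos | hpos
  · rw [symmBetaMap_eq_of_mem (k := 0) hL ⟨by push_cast; linarith, by push_cast; linarith⟩]
    push_cast
    constructor <;> nlinarith
  · rw [symmBetaMap_eq_of_mem (k := 1) hL ⟨by push_cast; linarith, by push_cast; linarith⟩]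
    push_cast
    constructor <;> nlinarith

lemma image_symmBetaMap_Ico (hL : 0 < L) (hβ : 0 < β) (hβ3 : β ≤ 3) :
    symmBetaMap β L '' Ico L (β * L) = Ico (β * L - 1) (β ^ 2 * L - 1) := by
  have hdigit : EqOn (symmBetaMap β L) (β * · + -1) (Ico L (β * L)) := by
    rintro z ⟨hlo, hhi⟩
    rw [symmBetaMap_eq_of_mem (k := 1) hL ⟨by push_cast; linarith, by push_cast; nlinarith⟩]
    push_cast
    ring
  rw [hdigit.image_eq, image_affine_Ico hβ]
  congr 1; ring

end symmBetaMap

section cubic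

variable {β : ℝ}

lemma zpow_neg_three_of_pow_three_eq (hcube : β ^ 3 = β + 1) : β ^ (-3 : ℤ) = β ^ 2 - β := by
  rw [zpow_neg, zpow_ofNat]
  exact inv_eq_of_mul_eq_one_right (by linear_combination (β ^ 2 - β + 1) * hcube)

lemma zpow_neg_four_of_pow_three_eq (hcube : β ^ 3 = β + 1) : β ^ (-4 : ℤ) = β - 1 := by
  rw [zpow_neg, zpow_ofNat]
  exact inv_eq_of_mul_eq_one_right (by linear_combination (β ^ 2 - β + 1) * hcube)

end cubic

theorem stmt_17 (β : ℝ) (hβ : 1 < β) (hcube : β ^ 3 = β + 1)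
    (τ : ℝ → ℝ) (hτ : ∀ z, τ z = β * z - ⌊(β ^ 2 + 1) / (2 * β ^ 2) * z + 1 / 2⌋) :
    (∀ z ∈ Set.Ico (-(β ^ 3 / (β ^ 2 + 1))) (β ^ 3 / (β ^ 2 + 1)),
      τ z ∈ Set.Ico (-(β ^ 3 / (β ^ 2 + 1))) (β ^ 3 / (β ^ 2 + 1))) ∧
    τ '' Set.Ico (β ^ 2 / (β ^ 2 + 1)) (β ^ 3 / (β ^ 2 + 1)) =
      Set.Ico (-(β ^ (-3 : ℤ) / (β ^ 2 + 1))) (β ^ (-4 : ℤ) / (β ^ 2 + 1)) := by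
  have hβ0 : 0 < β := by linarith
  have hs : 0 < β ^ 2 + 1 := by positivity
  have hβ2 : β < 2 := by nlinarith
  set L := β ^ 2 / (β ^ 2 + 1) with hL_def
  have hL : 0 < L := by positivity
  have hτL : τ = symmBetaMap β L := funext fun z => by
    rw [hτ, symmBetaMap, hL_def]
    congr 3
    field_simp
  have hβL : β ^ 3 / (β ^ 2 + 1) = β * L := by rw [hL_def]; ring
  have hlow : 1 ≤ 2 * β * L := by
    rw [hL_def, ← mul_div_assoc, le_div_iff₀ hs]; nlinarith
  have hhigh : β ^ 2 * L ≤ β * L + 1 := by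
    rw [hL_def, ← mul_div_assoc, ← mul_div_assoc, div_add_one hs.ne', div_le_div_iff_of_pos_right hs]
    nlinarith
  rw [hτL, hβL, zpow_neg_three_of_pow_three_eq hcube, zpow_neg_four_of_pow_three_eq hcube]
  refine ⟨mapsTo_symmBetaMap hL hβ0 (by linarith) hlow hhigh, ?_⟩
  rw [image_symmBetaMap_Ico hL hβ0 (by linarith), hL_def]
  congr 1 <;> field_simp
  · linear_combination hcube
  · linear_combination β * hcube
end
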